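/- Let θ = (5 − √17)/4 and define the sequence (η_k)_{k≥0} by η₀ = (2−θ)(θ² − 3θ + 1)/(2(θ−1)²), η₁ = 0, η₂ = 3θ/2, and η_k = k·θ^{k−1}/2 for k ≥ 3. Then η_k ≥ 0 for all k, η₀ > 0, Σ_{k≥0} η_k = 1, and Σ_{k≥1} k·η_k = 1 (i.e., η is a critical probability distribution on ℕ). -/

import Mathlib

/-!
For `k ≥ 3`, `η k = k θ^(k-1) / 2`, so the mass and the mean of `η` are the differentiated
geometric series `∑ k θ^(k-1) = (1-θ)⁻²` and `∑ k² θ^(k-1) = (1+θ)(1-θ)⁻³`, halved and corrected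
at `k ≤ 2`. The mass is then `1` by the choice of `η₀`, and the mean is `1` exactly because `θ`
is a root of `2θ² - 5θ + 1`, which is the equation `g′(θ) = 1`.
-/

namespace GalledB2

noncomputable def θ : ℝ := (5 - Real.sqrt 17) / 4

/-- The offspring distribution: `η₀ = (2−θ)(θ²−3θ+1)/(2(θ−1)²)`, `η₁ = 0`,
`η₂ = 3θ/2`, and `η_k = k θ^{k−1}/2` for `k ≥ 3`. -/
noncomputable def η : ℕ → ℝ
  | 0 => (2 - θ) * (θ ^ 2 - 3 * θ + 1) / (2 * (θ - 1) ^ 2)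
  | 1 => 0
  | 2 => 3 * θ / 2
  | (k + 3) => ((k + 3 : ℕ) : ℝ) * θ ^ (k + 2) / 2

end GalledB2

section

variable {𝕜 : Type*} [NormedField 𝕜] {r : 𝕜}

theorem hasSum_coe_mul_pow_pred (hr : ‖r‖ < 1) :
    HasSum (fun k : ℕ => (k : 𝕜) * r ^ (k - 1)) (1 / (1 - r) ^ 2) := by
  rw [← hasSum_nat_add_iff' 1]
  simpa [add_comm] using hasSum_choose_mul_geometric_of_norm_lt_one 1 hr

theorem hasSum_coe_sq_mul_pow_pred (hr : ‖r‖ < 1) :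
    HasSum (fun k : ℕ => (k : 𝕜) ^ 2 * r ^ (k - 1)) ((1 + r) / (1 - r) ^ 3) := by
  have hr' : 1 - r ≠ 0 := sub_ne_zero.2 fun h => by simp [← h] at hr
  rw [← hasSum_nat_add_iff' 1]
  have h2 := (hasSum_choose_mul_geometric_of_norm_lt_one 2 hr).mul_left 2
  have h1 := hasSum_choose_mul_geometric_of_norm_lt_one 1 hr
  -- `(n + 1)² = 2 * (n + 2).choose 2 - (n + 1).choose 1`
  convert h2.sub h1 using 1
  · funext n
    have hchoose : ((n + 2).choose 2 : 𝕜) * 2 = (n + 2) * (n + 1) := by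
      have h : (n + 2).choose 2 * 2 = (n + 2) * (n + 1) := by
        rw [← Nat.choose_one_right (n + 1)]
        exact (Nat.add_one_mul_choose_eq (n + 1) 1).symm
      simpa using congrArg (Nat.cast : ℕ → 𝕜) h
    simp only [Nat.cast_add, Nat.cast_one, add_tsub_cancel_right, Nat.choose_one_right]
    linear_combination (-r ^ n) * hchoose
  · rw [Finset.sum_range_one]
    field_simp
    ring

end

theorem HasSum.of_eq_on_Ici {α : Type*} [AddCommGroup α] [TopologicalSpace α]
    [IsTopologicalAddGroup α] {f g : ℕ → α} {a b : α} {N : ℕ} (hg : HasSum g a)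
    (hfg : ∀ k, N ≤ k → f k = g k) (hb : a + ∑ k ∈ Finset.range N, (f k - g k) = b) :
    HasSum f b := by
  have hfin : HasSum (fun k => f k - g k) (∑ k ∈ Finset.range N, (f k - g k)) :=
    hasSum_sum_of_ne_finset_zero fun k hk => by
      simp only [hfg k (by simpa using hk), sub_self]
  have hsum := hg.add hfin
  simp only [add_sub_cancel] at hsum
  rwa [hb] at hsum

namespace GalledB2

theorem θ_pos : 0 < θ := by
  have := Real.sq_sqrt (show (0 : ℝ) ≤ 17 by norm_num)
  unfold θ
  nlinarith [Real.sqrt_nonneg 17]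

theorem θ_lt_one_quarter : θ < 1 / 4 := by
  have := Real.sq_sqrt (show (0 : ℝ) ≤ 17 by norm_num)
  unfold θ
  nlinarith [Real.sqrt_nonneg 17]

theorem two_mul_θ_sq_sub_five_mul_θ_add_one_eq_zero : 2 * θ ^ 2 - 5 * θ + 1 = 0 := by
  have := Real.sq_sqrt (show (0 : ℝ) ≤ 17 by norm_num)
  unfold θ
  linear_combination this / 8

theorem norm_θ_lt_one : ‖θ‖ < 1 := by
  rw [Real.norm_of_nonneg θ_pos.le]
  linarith [θ_lt_one_quarter]

theorem η_of_three_le {k : ℕ} (hk : 3 ≤ k) : η k = k * θ ^ (k - 1) / 2 := by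
  obtain ⟨k, rfl⟩ := Nat.exists_eq_add_of_le' hk
  rfl

theorem η_zero_pos : 0 < η 0 := by
  have := θ_pos
  have := θ_lt_one_quarter
  show 0 < (2 - θ) * (θ ^ 2 - 3 * θ + 1) / (2 * (θ - 1) ^ 2)
  apply div_pos <;> nlinarith

theorem η_nonneg : ∀ k, 0 ≤ η k
  | 0 => η_zero_pos.le
  | 1 => le_rfl
  | 2 => by simp only [η]; linarith [θ_pos]
  | k + 3 => by simp only [η]; have := θ_pos; positivity

/-- **Theorem.** `η` is a critical probability distribution on ℕ with `η₀ > 0`: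
all `η_k` are nonnegative, `η₀ > 0`, `Σ_k η_k = 1`, and `Σ_k k η_k = 1`. -/
theorem eta_critical_probability :
    (∀ k, 0 ≤ η k) ∧ 0 < η 0 ∧ HasSum η 1 ∧ HasSum (fun k : ℕ => (k : ℝ) * η k) 1 := by
  have hθ_sub_one : θ - 1 ≠ 0 := by linarith [θ_lt_one_quarter]
  have hone_sub_θ : 1 - θ ≠ 0 := by linarith [θ_lt_one_quarter]
  refine ⟨η_nonneg, η_zero_pos, ?_, ?_⟩
  · refine ((hasSum_coe_mul_pow_pred norm_θ_lt_one).div_const 2).of_eq_on_Ici (N := 3)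
      (fun k hk => η_of_three_le hk) ?_
    norm_num [Finset.sum_range_succ, η]
    field_simp
    ring
  · refine ((hasSum_coe_sq_mul_pow_pred norm_θ_lt_one).div_const 2).of_eq_on_Ici (N := 3)
      (fun k hk => by simp only [η_of_three_le hk]; ring) ?_
    norm_num [Finset.sum_range_succ, η]
    field_simp
    linear_combination -(θ ^ 2 - 2 * θ + 2) * two_mul_θ_sq_sub_five_mul_θ_add_one_eq_zero

end GalledB2
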